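/- arXiv:1805.00316 — 5 statements merged into one kernel-verified Lean document; each statement's English description precedes it below -/
import Mathlib

section
/- Let p₁, p₂ be probability density functions on a measure space. The functional C ↦ ∫ p₁(x)·log(C(x)) + p₂(x)·log(1−C(x)) dx, over measurable functions C with values in (0,1), is maximized pointwise by C*(x) = p₁(x)/(p₁(x)+p₂(x)) (at points where p₁(x)+p₂(x) > 0). -/
open MeasureTheory Real

lemma aux_gibbs (a s c : ℝ) (ha : 0 ≤ a) (hs : 0 < s) (hc : 0 < c) :
    a * Real.log c ≤ (c * s - a) + a * Real.log (a / s) := by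
  rcases eq_or_lt_of_le ha with h | h
  · simp [← h]
    positivity
  · have hcs : c * s / a > 0 := by positivity
    have hlog : Real.log (c * s / a) ≤ c * s / a - 1 :=
      Real.log_le_sub_one_of_pos hcs
    have hsplit : Real.log c = Real.log (c * s / a) + Real.log (a / s) := by
      rw [Real.log_div (by positivity) (ne_of_gt h), Real.log_mul (ne_of_gt hc) (ne_of_gt hs),
        Real.log_div (ne_of_gt h) (ne_of_gt hs)]
      ring
    rw [hsplit, mul_add]
    have : a * Real.log (c * s / a) ≤ c * s - a := by
      calc a * Real.log (c * s / a) ≤ a * (c * s / a - 1) := by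
            exact mul_le_mul_of_nonneg_left hlog ha
        _ = c * s - a := by field_simp
    linarith

/-- The negative binary cross-entropy functional
`C ↦ ∫ p₁ log C + p₂ log (1 - C)` over measurable classifiers valued in `(0,1)`
is maximized pointwise by `C*(x) = p₁ x / (p₁ x + p₂ x)` at every point where
`p₁ x + p₂ x > 0`. -/
theorem optimal_classifier_pointwise
    {X : Type*} [MeasurableSpace X] (μ : Measure X) [SigmaFinite μ]
    (p₁ p₂ : X → ℝ) (hp₁m : Measurable p₁) (hp₂m : Measurable p₂)
    (hp₁ : ∀ x, 0 ≤ p₁ x) (hp₂ : ∀ x, 0 ≤ p₂ x)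
    (hp₁int : ∫ x, p₁ x ∂μ = 1) (hp₂int : ∫ x, p₂ x ∂μ = 1)
    (C : X → ℝ) (hCm : Measurable C) (hC : ∀ x, C x ∈ Set.Ioo (0 : ℝ) 1) :
    ∀ x, 0 < p₁ x + p₂ x →
      p₁ x * Real.log (C x) + p₂ x * Real.log (1 - C x) ≤
        p₁ x * Real.log (p₁ x / (p₁ x + p₂ x)) +
          p₂ x * Real.log (1 - p₁ x / (p₁ x + p₂ x)) := by
  intro x hs
  obtain ⟨hc0, hc1⟩ := hC x
  set a := p₁ x
  set b := p₂ x
  set s := a + b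
  have hrw : 1 - a / s = b / s := by
    field_simp [ne_of_gt hs]
    simp only [s]
    ring
  rw [hrw]
  have h1 := aux_gibbs a s (C x) (hp₁ x) hs hc0
  have h2 := aux_gibbs b s (1 - C x) (hp₂ x) hs (by linarith)
  have : C x * s + (1 - C x) * s = s := by ring
  linarith
end

section
/- For any two probability densities p₁, p₂, the value of the negative cross-entropy at the optimal classifier satisfies ∫ p₁ log(p₁/(p₁+p₂)) + p₂ log(p₂/(p₁+p₂)) = −log 4 + KL(p₁ ‖ (p₁+p₂)/2) + KL(p₂ ‖ (p₁+p₂)/2). -/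
open MeasureTheory Real

/-- Negative cross-entropy at the optimal classifier:
`∫ p₁ log (p₁/(p₁+p₂)) + p₂ log (p₂/(p₁+p₂))
  = -log 4 + KL(p₁ ‖ (p₁+p₂)/2) + KL(p₂ ‖ (p₁+p₂)/2)`. -/
theorem neg_cross_entropy_eq_kl
    {X : Type*} [MeasurableSpace X] (μ : Measure X) [SigmaFinite μ]
    (p₁ p₂ : X → ℝ) (hp₁m : Measurable p₁) (hp₂m : Measurable p₂)
    (hp₁ : ∀ x, 0 ≤ p₁ x) (hp₂ : ∀ x, 0 ≤ p₂ x)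
    (hp₁int : ∫ x, p₁ x ∂μ = 1) (hp₂int : ∫ x, p₂ x ∂μ = 1)
    (hInt : Integrable (fun x => p₁ x * Real.log (p₁ x / (p₁ x + p₂ x))
              + p₂ x * Real.log (p₂ x / (p₁ x + p₂ x))) μ)
    (hKL₁ : Integrable (fun x => p₁ x * Real.log (p₁ x / ((p₁ x + p₂ x) / 2))) μ)
    (hKL₂ : Integrable (fun x => p₂ x * Real.log (p₂ x / ((p₁ x + p₂ x) / 2))) μ) :
    ∫ x, (p₁ x * Real.log (p₁ x / (p₁ x + p₂ x))
        + p₂ x * Real.log (p₂ x / (p₁ x + p₂ x))) ∂μ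
      = -Real.log 4
        + ∫ x, p₁ x * Real.log (p₁ x / ((p₁ x + p₂ x) / 2)) ∂μ
        + ∫ x, p₂ x * Real.log (p₂ x / ((p₁ x + p₂ x) / 2)) ∂μ := by
  have hpi1 : Integrable p₁ μ := by
    by_contra h
    rw [integral_undef h] at hp₁int
    norm_num at hp₁int
  have hpi2 : Integrable p₂ μ := by
    by_contra h
    rw [integral_undef h] at hp₂int
    norm_num at hp₂int
  -- pointwise key identity for each term
  have term : ∀ (a b : ℝ), 0 ≤ a → 0 ≤ b →
      a * Real.log (a / (a + b)) =
        a * Real.log (a / ((a + b) / 2)) - a * Real.log 2 := by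
    intro a b ha hb
    rcases eq_or_lt_of_le ha with h0 | h0
    · simp [← h0]
    · have hs : 0 < a + b := by linarith
      rw [Real.log_div h0.ne' hs.ne',
        Real.log_div h0.ne' (by positivity : ((a + b) / 2 : ℝ) ≠ 0),
        Real.log_div hs.ne' (two_ne_zero)]
      ring
  have key : ∀ x, (p₁ x * Real.log (p₁ x / (p₁ x + p₂ x))
        + p₂ x * Real.log (p₂ x / (p₁ x + p₂ x)))
      = (p₁ x * Real.log (p₁ x / ((p₁ x + p₂ x) / 2))
        + p₂ x * Real.log (p₂ x / ((p₁ x + p₂ x) / 2)))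
        - (p₁ x + p₂ x) * Real.log 2 := by
    intro x
    have h1 := term (p₁ x) (p₂ x) (hp₁ x) (hp₂ x)
    have h2 := term (p₂ x) (p₁ x) (hp₂ x) (hp₁ x)
    rw [add_comm (p₂ x) (p₁ x)] at h2
    rw [h1, h2]; ring
  have hInt' : Integrable (fun x => (p₁ x + p₂ x) * Real.log 2) μ :=
    ((hpi1.add hpi2).mul_const _)
  calc ∫ x, (p₁ x * Real.log (p₁ x / (p₁ x + p₂ x))
        + p₂ x * Real.log (p₂ x / (p₁ x + p₂ x))) ∂μ
      = ∫ x, ((p₁ x * Real.log (p₁ x / ((p₁ x + p₂ x) / 2))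
        + p₂ x * Real.log (p₂ x / ((p₁ x + p₂ x) / 2)))
        - (p₁ x + p₂ x) * Real.log 2) ∂μ := by
        exact integral_congr_ae (Filter.Eventually.of_forall key)
    _ = (∫ x, p₁ x * Real.log (p₁ x / ((p₁ x + p₂ x) / 2)) ∂μ
        + ∫ x, p₂ x * Real.log (p₂ x / ((p₁ x + p₂ x) / 2)) ∂μ)
        - ∫ x, (p₁ x + p₂ x) * Real.log 2 ∂μ := by
        have hsum : Integrable (fun x => p₁ x * Real.log (p₁ x / ((p₁ x + p₂ x) / 2))
            + p₂ x * Real.log (p₂ x / ((p₁ x + p₂ x) / 2))) μ := hKL₁.add hKL₂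
        rw [integral_sub hsum hInt', integral_add hKL₁ hKL₂]
    _ = _ := by
        have : ∫ x, (p₁ x + p₂ x) * Real.log 2 ∂μ = 2 * Real.log 2 := by
          simp_rw [add_mul]
          rw [integral_add (hpi1.mul_const _) (hpi2.mul_const _),
            integral_mul_const, integral_mul_const, hp₁int, hp₂int]
          ring
        rw [this, show (4:ℝ) = 2^2 by norm_num, Real.log_pow]
        push_cast
        ring
end

section
/- The optimal binary cross-entropy loss ℒ(p₁,p₂) := −∫ p₁ log(p₁/(p₁+p₂)) − ∫ p₂ log(p₂/(p₁+p₂)) satisfies ℒ(p₁,p₂) ≤ log 4, with equality if and only if p₁ = p₂ almost everywhere. -/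
open MeasureTheory Real

lemma aux_mul_log {u : ℝ} (hu : 0 < u) : u - 1 ≤ u * Real.log u := by
  rcases eq_or_ne u 1 with h | h
  · simp [h]
  · have h1 : Real.log u⁻¹ < u⁻¹ - 1 :=
      Real.log_lt_sub_one_of_pos (by positivity) (by simpa using h)
    rw [Real.log_inv] at h1
    have h2 : u * u⁻¹ = 1 := mul_inv_cancel₀ hu.ne'
    nlinarith [mul_lt_mul_of_pos_left h1 hu]

lemma aux_mul_log_strict {u : ℝ} (hu : 0 < u) (hne : u ≠ 1) :
    u - 1 < u * Real.log u := by
  have h1 : Real.log u⁻¹ < u⁻¹ - 1 :=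
    Real.log_lt_sub_one_of_pos (by positivity) (by simpa using hne)
  rw [Real.log_inv] at h1
  have h2 : u * u⁻¹ = 1 := mul_inv_cancel₀ hu.ne'
  nlinarith [mul_lt_mul_of_pos_left h1 hu]

lemma term_rewrite {a s : ℝ} (ha : 0 < a) (hs : 0 < s) :
    a * Real.log (a / s) + a * Real.log 2
      = (s / 2) * ((2 * a / s) * Real.log (2 * a / s)) := by
  have h : Real.log (2 * a / s) = Real.log 2 + Real.log (a / s) := by
    rw [mul_div_assoc, Real.log_mul two_ne_zero (by positivity)]
  rw [h]; field_simp; ring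

lemma term_le {a s : ℝ} (ha : 0 ≤ a) (hs : 0 < s) :
    a - s / 2 ≤ a * Real.log (a / s) + a * Real.log 2 := by
  rcases ha.eq_or_lt with h | h
  · simp [← h]; positivity
  · rw [term_rewrite h hs]
    have hu : 0 < 2 * a / s := by positivity
    have := aux_mul_log hu
    have h2 : (s / 2) * (2 * a / s - 1) = a - s / 2 := by field_simp
    nlinarith

lemma term_lt {a s : ℝ} (ha : 0 ≤ a) (hs : 0 < s) (hne : a ≠ s / 2) :
    a - s / 2 < a * Real.log (a / s) + a * Real.log 2 := by
  rcases ha.eq_or_lt with h | h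
  · simp [← h]; positivity
  · rw [term_rewrite h hs]
    have hu : 0 < 2 * a / s := by positivity
    have hu1 : 2 * a / s ≠ 1 := by
      intro hc
      apply hne
      field_simp at hc
      linarith
    have := aux_mul_log_strict hu hu1
    have h2 : (s / 2) * (2 * a / s - 1) = a - s / 2 := by field_simp
    nlinarith

noncomputable def G (a b : ℝ) : ℝ :=
  a * Real.log (a / (a + b)) + b * Real.log (b / (a + b)) + (a + b) * Real.log 2

lemma G_nonneg {a b : ℝ} (ha : 0 ≤ a) (hb : 0 ≤ b) : 0 ≤ G a b := by
  rcases eq_or_lt_of_le (by positivity : (0:ℝ) ≤ a + b) with hs | hs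
  · have ha0 : a = 0 := by linarith
    have hb0 : b = 0 := by linarith
    simp [G, ha0, hb0]
  · have h1 := term_le ha hs
    have h2 := term_le hb hs
    rw [show b / (a + b) = b / (b + a) by ring_nf, show a + b = b + a by ring] at h2
    unfold G
    rw [show b + a = a + b by ring] at h2
    nlinarith

lemma G_eq_zero_iff {a b : ℝ} (ha : 0 ≤ a) (hb : 0 ≤ b) : G a b = 0 ↔ a = b := by
  constructor
  · intro h
    by_contra hab
    rcases eq_or_lt_of_le (by positivity : (0:ℝ) ≤ a + b) with hs | hs
    · exact hab (by linarith)
    · have hane : a ≠ (a + b) / 2 := fun hc => hab (by linarith)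
      have hbne : b ≠ (a + b) / 2 := fun hc => hab (by linarith)
      have h1 := term_lt ha hs hane
      have h2 := term_lt hb hs hbne
      rw [show a + b = b + a by ring] at h2
      unfold G at h
      rw [show b + a = a + b by ring] at h2
      nlinarith
  · intro h
    subst h
    rcases eq_or_lt_of_le ha with h0 | h0
    · simp [G, ← h0]
    · have : a / (a + a) = 1 / 2 := by field_simp; ring
      simp [G, this, Real.log_div one_ne_zero two_ne_zero]
      ring

/-- The optimal binary cross-entropy loss
`ℒ(p₁,p₂) = -∫ p₁ log (p₁/(p₁+p₂)) - ∫ p₂ log (p₂/(p₁+p₂))`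
satisfies `ℒ(p₁,p₂) ≤ log 4`, with equality iff `p₁ = p₂` a.e. -/
theorem optimal_bce_le_log_four
    {X : Type*} [MeasurableSpace X] (μ : Measure X) [SigmaFinite μ]
    (p₁ p₂ : X → ℝ) (hp₁m : Measurable p₁) (hp₂m : Measurable p₂)
    (hp₁ : ∀ x, 0 ≤ p₁ x) (hp₂ : ∀ x, 0 ≤ p₂ x)
    (hp₁int : ∫ x, p₁ x ∂μ = 1) (hp₂int : ∫ x, p₂ x ∂μ = 1)
    (hI₁ : Integrable (fun x => p₁ x * Real.log (p₁ x / (p₁ x + p₂ x))) μ)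
    (hI₂ : Integrable (fun x => p₂ x * Real.log (p₂ x / (p₁ x + p₂ x))) μ) :
    (-∫ x, p₁ x * Real.log (p₁ x / (p₁ x + p₂ x)) ∂μ
      - ∫ x, p₂ x * Real.log (p₂ x / (p₁ x + p₂ x)) ∂μ) ≤ Real.log 4
    ∧ ((-∫ x, p₁ x * Real.log (p₁ x / (p₁ x + p₂ x)) ∂μ
        - ∫ x, p₂ x * Real.log (p₂ x / (p₁ x + p₂ x)) ∂μ) = Real.log 4
          ↔ p₁ =ᵐ[μ] p₂) := by
  have hip1 : Integrable p₁ μ := by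
    by_contra h
    rw [integral_undef h] at hp₁int
    norm_num at hp₁int
  have hip2 : Integrable p₂ μ := by
    by_contra h
    rw [integral_undef h] at hp₂int
    norm_num at hp₂int
  have hlog4 : Real.log 4 = 2 * Real.log 2 := by
    rw [show (4:ℝ) = 2 ^ 2 by norm_num, Real.log_pow]
    push_cast; ring
  have hgint : Integrable (fun x => G (p₁ x) (p₂ x)) μ := by
    unfold G
    exact (hI₁.add hI₂).add ((hip1.add hip2).mul_const _)
  have hginteg : ∫ x, G (p₁ x) (p₂ x) ∂μ
      = (∫ x, p₁ x * Real.log (p₁ x / (p₁ x + p₂ x)) ∂μ)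
        + (∫ x, p₂ x * Real.log (p₂ x / (p₁ x + p₂ x)) ∂μ) + Real.log 4 := by
    unfold G
    have e1 : ∫ x, (p₁ x * Real.log (p₁ x / (p₁ x + p₂ x))
          + p₂ x * Real.log (p₂ x / (p₁ x + p₂ x)))
          + (p₁ x + p₂ x) * Real.log 2 ∂μ
        = (∫ x, p₁ x * Real.log (p₁ x / (p₁ x + p₂ x))
            + p₂ x * Real.log (p₂ x / (p₁ x + p₂ x)) ∂μ)
          + ∫ x, (p₁ x + p₂ x) * Real.log 2 ∂μ :=
      integral_add (hI₁.add hI₂) ((hip1.add hip2).mul_const _)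
    have e2 : ∫ x, p₁ x * Real.log (p₁ x / (p₁ x + p₂ x))
          + p₂ x * Real.log (p₂ x / (p₁ x + p₂ x)) ∂μ
        = (∫ x, p₁ x * Real.log (p₁ x / (p₁ x + p₂ x)) ∂μ)
          + ∫ x, p₂ x * Real.log (p₂ x / (p₁ x + p₂ x)) ∂μ :=
      integral_add hI₁ hI₂
    have e3 : ∫ x, (p₁ x + p₂ x) * Real.log 2 ∂μ
        = (∫ x, p₁ x + p₂ x ∂μ) * Real.log 2 := integral_mul_const _ _
    have e4 : ∫ x, p₁ x + p₂ x ∂μ = (∫ x, p₁ x ∂μ) + ∫ x, p₂ x ∂μ :=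
      integral_add hip1 hip2
    rw [e1, e2, e3, e4, hp₁int, hp₂int, hlog4]
    ring
  have hgnn : ∀ x, 0 ≤ G (p₁ x) (p₂ x) := fun x => G_nonneg (hp₁ x) (hp₂ x)
  have hge : 0 ≤ ∫ x, G (p₁ x) (p₂ x) ∂μ := integral_nonneg hgnn
  constructor
  · linarith
  · rw [show (-∫ x, p₁ x * Real.log (p₁ x / (p₁ x + p₂ x)) ∂μ
        - ∫ x, p₂ x * Real.log (p₂ x / (p₁ x + p₂ x)) ∂μ = Real.log 4
        ↔ ∫ x, G (p₁ x) (p₂ x) ∂μ = 0) by constructor <;> intro h <;> linarith]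
    rw [integral_eq_zero_iff_of_nonneg hgnn hgint]
    constructor
    · intro h
      filter_upwards [h] with x hx
      exact (G_eq_zero_iff (hp₁ x) (hp₂ x)).mp hx
    · intro h
      filter_upwards [h] with x hx
      exact (G_eq_zero_iff (hp₁ x) (hp₂ x)).mpr hx
end

section
/- For probability densities p₁, p₂, the Jensen–Shannon divergence JSD(p₁ ‖ p₂) = (1/2)·KL(p₁ ‖ (p₁+p₂)/2) + (1/2)·KL(p₂ ‖ (p₁+p₂)/2) satisfies the identity ℒ(p₁,p₂) = log 4 − 2·JSD(p₁ ‖ p₂), where ℒ is the optimal binary cross-entropy loss. -/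
open MeasureTheory Real

lemma bce_pointwise {p q : ℝ} (hp : 0 ≤ p) (hq : 0 ≤ q) :
    p * Real.log (p / ((p + q) / 2)) = p * Real.log (p / (p + q)) + p * Real.log 2 := by
  rcases eq_or_lt_of_le hp with h | h
  · simp [← h]
  · have hpq : 0 < p + q := by linarith
    have : p / ((p + q) / 2) = 2 * (p / (p + q)) := by field_simp
    rw [this, Real.log_mul (by norm_num) (ne_of_gt (div_pos h hpq))]
    ring

/-- With `JSD(p₁‖p₂) = ½ KL(p₁ ‖ (p₁+p₂)/2) + ½ KL(p₂ ‖ (p₁+p₂)/2)`, the optimal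
binary cross-entropy loss satisfies `ℒ(p₁,p₂) = log 4 - 2·JSD(p₁‖p₂)`. -/
theorem bce_eq_log4_sub_two_jsd
    {X : Type*} [MeasurableSpace X] (μ : Measure X) [SigmaFinite μ]
    (p₁ p₂ : X → ℝ) (hp₁m : Measurable p₁) (hp₂m : Measurable p₂)
    (hp₁ : ∀ x, 0 ≤ p₁ x) (hp₂ : ∀ x, 0 ≤ p₂ x)
    (hp₁int : ∫ x, p₁ x ∂μ = 1) (hp₂int : ∫ x, p₂ x ∂μ = 1)
    (hI₁ : Integrable (fun x => p₁ x * Real.log (p₁ x / (p₁ x + p₂ x))) μ)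
    (hI₂ : Integrable (fun x => p₂ x * Real.log (p₂ x / (p₁ x + p₂ x))) μ)
    (hKL₁ : Integrable (fun x => p₁ x * Real.log (p₁ x / ((p₁ x + p₂ x) / 2))) μ)
    (hKL₂ : Integrable (fun x => p₂ x * Real.log (p₂ x / ((p₁ x + p₂ x) / 2))) μ) :
    (-∫ x, p₁ x * Real.log (p₁ x / (p₁ x + p₂ x)) ∂μ
      - ∫ x, p₂ x * Real.log (p₂ x / (p₁ x + p₂ x)) ∂μ)
    = Real.log 4
      - 2 * ((1 / 2) * ∫ x, p₁ x * Real.log (p₁ x / ((p₁ x + p₂ x) / 2)) ∂μ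
           + (1 / 2) * ∫ x, p₂ x * Real.log (p₂ x / ((p₁ x + p₂ x) / 2)) ∂μ) := by
  have key₁ : ∀ x, p₁ x * Real.log (p₁ x / ((p₁ x + p₂ x) / 2))
      = p₁ x * Real.log (p₁ x / (p₁ x + p₂ x)) + p₁ x * Real.log 2 :=
    fun x => bce_pointwise (hp₁ x) (hp₂ x)
  have key₂ : ∀ x, p₂ x * Real.log (p₂ x / ((p₁ x + p₂ x) / 2))
      = p₂ x * Real.log (p₂ x / (p₁ x + p₂ x)) + p₂ x * Real.log 2 := by
    intro x
    have := bce_pointwise (hp₂ x) (hp₁ x)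
    rw [add_comm (p₂ x)] at this
    exact this
  have hint₁ : Integrable (fun x => p₁ x * Real.log 2) μ := by
    have h := hKL₁.sub hI₁
    refine h.congr (Filter.Eventually.of_forall fun x => ?_)
    simp [key₁ x]
  have hint₂ : Integrable (fun x => p₂ x * Real.log 2) μ := by
    have h := hKL₂.sub hI₂
    refine h.congr (Filter.Eventually.of_forall fun x => ?_)
    simp [key₂ x]
  have e₁ : ∫ x, p₁ x * Real.log (p₁ x / ((p₁ x + p₂ x) / 2)) ∂μ
      = (∫ x, p₁ x * Real.log (p₁ x / (p₁ x + p₂ x)) ∂μ) + Real.log 2 := by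
    rw [show (fun x => p₁ x * Real.log (p₁ x / ((p₁ x + p₂ x) / 2)))
        = fun x => p₁ x * Real.log (p₁ x / (p₁ x + p₂ x)) + p₁ x * Real.log 2 from
        funext key₁, integral_add hI₁ hint₁, integral_mul_const, hp₁int, one_mul]
  have e₂ : ∫ x, p₂ x * Real.log (p₂ x / ((p₁ x + p₂ x) / 2)) ∂μ
      = (∫ x, p₂ x * Real.log (p₂ x / (p₁ x + p₂ x)) ∂μ) + Real.log 2 := by
    rw [show (fun x => p₂ x * Real.log (p₂ x / ((p₁ x + p₂ x) / 2)))
        = fun x => p₂ x * Real.log (p₂ x / (p₁ x + p₂ x)) + p₂ x * Real.log 2 from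
        funext key₂, integral_add hI₂ hint₂, integral_mul_const, hp₂int, one_mul]
  have h4 : Real.log 4 = 2 * Real.log 2 := by
    rw [show (4 : ℝ) = 2 ^ 2 by norm_num, Real.log_pow]; push_cast; ring
  rw [e₁, e₂, h4]; ring
end

section
/- For any fixed densities p₁, p₂ and any measurable classifier C : X → (0,1), the binary cross-entropy loss satisfies ℒ_C(p₁,p₂) := −∫ p₁ log C − ∫ p₂ log(1−C) ≥ log 4 − 2·JSD(p₁ ‖ p₂). -/
open MeasureTheory Real

lemma bce_key {a b : ℝ} (ha : 0 < a) (hb : 0 < b) :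
    a - b ≤ a * Real.log (a / b) := by
  have h := Real.log_le_sub_one_of_pos (div_pos hb ha)
  rw [Real.log_div hb.ne' ha.ne'] at h
  rw [Real.log_div ha.ne' hb.ne']
  have h2 : a * (Real.log b - Real.log a) ≤ a * (b / a - 1) :=
    mul_le_mul_of_nonneg_left h ha.le
  have h3 : a * (b / a - 1) = b - a := by field_simp
  nlinarith

lemma bce_pointwise_s10 {a b c : ℝ} (ha0 : 0 ≤ a) (hb0 : 0 ≤ b)
    (hc0 : 0 < c) (hc1 : c < 1) :
    0 ≤ (a * Real.log (a / ((a + b) / 2)) - a * Real.log c - a * Real.log 2)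
      + (b * Real.log (b / ((a + b) / 2)) - b * Real.log (1 - c) - b * Real.log 2) := by
  rcases ha0.eq_or_lt with haz | hap
  · rcases hb0.eq_or_lt with hbz | hbp
    · simp [← haz, ← hbz]
    · have h1 : b / ((a + b) / 2) = 2 := by
        rw [← haz]; field_simp; ring
      have h2 : Real.log (1 - c) < 0 :=
        Real.log_neg (by linarith) (by linarith)
      rw [h1, ← haz]
      nlinarith
  · rcases hb0.eq_or_lt with hbz | hbp
    · have h1 : a / ((a + b) / 2) = 2 := by
        rw [← hbz]; field_simp; ring
      have h2 : Real.log c < 0 := Real.log_neg hc0 hc1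
      rw [h1, ← hbz]
      nlinarith
    · have hab : 0 < a + b := by linarith
      have hm : 0 < (a + b) / 2 := by linarith
      have hq1 : 0 < (a + b) * c := mul_pos hab hc0
      have hq2 : 0 < (a + b) * (1 - c) := mul_pos hab (by linarith)
      have e1 : Real.log (a / ((a + b) / 2)) - Real.log c - Real.log 2
          = Real.log (a / ((a + b) * c)) := by
        rw [Real.log_div hap.ne' hm.ne', Real.log_div hap.ne' hq1.ne',
          Real.log_div hab.ne' (by norm_num : (2:ℝ) ≠ 0),
          Real.log_mul hab.ne' hc0.ne']
        ring
      have e2 : Real.log (b / ((a + b) / 2)) - Real.log (1 - c) - Real.log 2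
          = Real.log (b / ((a + b) * (1 - c))) := by
        rw [Real.log_div hbp.ne' hm.ne', Real.log_div hbp.ne' hq2.ne',
          Real.log_div hab.ne' (by norm_num : (2:ℝ) ≠ 0),
          Real.log_mul hab.ne' (by linarith : (1 : ℝ) - c ≠ 0)]
        ring
      have k1 := bce_key hap hq1
      have k2 := bce_key hbp hq2
      have g1 : a * Real.log (a / ((a + b) / 2)) - a * Real.log c
          - a * Real.log 2 = a * Real.log (a / ((a + b) * c)) := by
        rw [← e1]; ring
      have g2 : b * Real.log (b / ((a + b) / 2)) - b * Real.log (1 - c)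
          - b * Real.log 2 = b * Real.log (b / ((a + b) * (1 - c))) := by
        rw [← e2]; ring
      rw [g1, g2]
      nlinarith

/-- For any measurable classifier `C : X → (0,1)`, the binary cross-entropy
loss satisfies `ℒ_C(p₁,p₂) = -∫ p₁ log C - ∫ p₂ log (1-C) ≥ log 4 - 2·JSD(p₁‖p₂)`. -/
theorem bce_ge_log4_sub_two_jsd
    {X : Type*} [MeasurableSpace X] (μ : Measure X) [SigmaFinite μ]
    (p₁ p₂ : X → ℝ) (hp₁m : Measurable p₁) (hp₂m : Measurable p₂)
    (hp₁ : ∀ x, 0 ≤ p₁ x) (hp₂ : ∀ x, 0 ≤ p₂ x)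
    (hp₁int : ∫ x, p₁ x ∂μ = 1) (hp₂int : ∫ x, p₂ x ∂μ = 1)
    (C : X → ℝ) (hCm : Measurable C) (hC : ∀ x, C x ∈ Set.Ioo (0 : ℝ) 1)
    (hI₁ : Integrable (fun x => p₁ x * Real.log (C x)) μ)
    (hI₂ : Integrable (fun x => p₂ x * Real.log (1 - C x)) μ)
    (hKL₁ : Integrable (fun x => p₁ x * Real.log (p₁ x / ((p₁ x + p₂ x) / 2))) μ)
    (hKL₂ : Integrable (fun x => p₂ x * Real.log (p₂ x / ((p₁ x + p₂ x) / 2))) μ) :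
    Real.log 4
      - 2 * ((1 / 2) * ∫ x, p₁ x * Real.log (p₁ x / ((p₁ x + p₂ x) / 2)) ∂μ
           + (1 / 2) * ∫ x, p₂ x * Real.log (p₂ x / ((p₁ x + p₂ x) / 2)) ∂μ)
    ≤ (-∫ x, p₁ x * Real.log (C x) ∂μ - ∫ x, p₂ x * Real.log (1 - C x) ∂μ) := by
  -- integrability of the densities
  have hp₁I : Integrable p₁ μ := by
    by_contra h
    rw [integral_undef h] at hp₁int; norm_num at hp₁int
  have hp₂I : Integrable p₂ μ := by
    by_contra h
    rw [integral_undef h] at hp₂int; norm_num at hp₂int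
  have hL1 : Integrable (fun x => p₁ x * Real.log 2) μ := hp₁I.mul_const _
  have hL2 : Integrable (fun x => p₂ x * Real.log 2) μ := hp₂I.mul_const _
  have hA1 : Integrable (fun x => p₁ x * Real.log (p₁ x / ((p₁ x + p₂ x) / 2))
      - p₁ x * Real.log (C x)) μ := hKL₁.sub hI₁
  have hA : Integrable (fun x => p₁ x * Real.log (p₁ x / ((p₁ x + p₂ x) / 2))
      - p₁ x * Real.log (C x) - p₁ x * Real.log 2) μ := hA1.sub hL1
  have hB1 : Integrable (fun x => p₂ x * Real.log (p₂ x / ((p₁ x + p₂ x) / 2))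
      - p₂ x * Real.log (1 - C x)) μ := hKL₂.sub hI₂
  have hB : Integrable (fun x => p₂ x * Real.log (p₂ x / ((p₁ x + p₂ x) / 2))
      - p₂ x * Real.log (1 - C x) - p₂ x * Real.log 2) μ := hB1.sub hL2
  have hint : 0 ≤ ∫ x,
      ((p₁ x * Real.log (p₁ x / ((p₁ x + p₂ x) / 2)) - p₁ x * Real.log (C x)
        - p₁ x * Real.log 2)
      + (p₂ x * Real.log (p₂ x / ((p₁ x + p₂ x) / 2)) - p₂ x * Real.log (1 - C x)
        - p₂ x * Real.log 2)) ∂μ := by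
    refine integral_nonneg fun x => ?_
    exact bce_pointwise_s10 (hp₁ x) (hp₂ x) (hC x).1 (hC x).2
  rw [integral_add hA hB, integral_sub hA1 hL1, integral_sub hKL₁ hI₁,
    integral_sub hB1 hL2, integral_sub hKL₂ hI₂,
    integral_mul_const, integral_mul_const, hp₁int, hp₂int] at hint
  have hlog4 : Real.log 4 = 2 * Real.log 2 := by
    rw [show (4:ℝ) = 2 ^ 2 by norm_num, Real.log_pow]; norm_num
  rw [hlog4]
  linarith
end
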